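/- arXiv:0704.2947 — 9 statements merged into one kernel-verified Lean document; each statement's English description precedes it below -/
import Mathlib

section
/- If n = p^m is a power of the characteristic p of F_q with m ≥ 0, then Δ^{p^m - 1} ≠ 0; hence the nilpotency index of Δ on F_q^{p^m} is exactly p^m. -/
theorem stmt_7 (p m : ℕ) (F : Type*) [Field F] [Fintype F] [CharP F p]
    (hp : p.Prime) :
    (∀ x : ZMod (p ^ m) → F,
      (fun (y : ZMod (p ^ m) → F) => fun j => y (j + 1) - y j)^[p ^ m] x = 0) ∧
    (∃ x : ZMod (p ^ m) → F,
      (fun (y : ZMod (p ^ m) → F) => fun j => y (j + 1) - y j)^[p ^ m - 1] x ≠ 0) := by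
  haveI : Fact p.Prime := ⟨hp⟩
  set n := p ^ m with hn
  haveI : NeZero n := ⟨pow_ne_zero m hp.pos.ne'⟩
  set D : (ZMod n → F) → (ZMod n → F) := fun y => fun j => y (j + 1) - y j with hD
  let S : (ZMod n → F) →ₗ[F] (ZMod n → F) :=
    { toFun := fun y j => y (j + 1)
      map_add' := fun a b => rfl
      map_smul' := fun c a => rfl }
  have hSpow : ∀ (k : ℕ) (y : ZMod n → F) (j : ZMod n), (S ^ k) y j = y (j + (k : ZMod n)) := by
    intro k
    induction k with
    | zero => intro y j; simp
    | succ k ih =>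
      intro y j
      have h2 : (S ^ (k + 1)) y j = (S ^ k) (S y) j := by
        rw [pow_succ, Module.End.mul_apply]
      rw [h2, ih]
      show y (j + (k : ZMod n) + 1) = y (j + ((k + 1 : ℕ) : ZMod n))
      congr 1
      push_cast
      ring
  have hDpow : ∀ (k : ℕ) (x : ZMod n → F), D^[k] x = ((S - 1) ^ k) x := by
    intro k
    induction k with
    | zero => intro x; simp
    | succ k ih =>
      intro x
      rw [Function.iterate_succ_apply', ih, pow_succ', Module.End.mul_apply]
      rfl
  constructor
  · -- Part 1
    intro x
    rw [hDpow]
    haveI : Nontrivial (Module.End F (ZMod n → F)) := by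
      refine ⟨0, 1, fun h => ?_⟩
      have h1 := LinearMap.congr_fun h (fun _ => (1 : F))
      have h2 := congr_fun h1 0
      simp at h2
    haveI : CharP (Module.End F (ZMod n → F)) p :=
      charP_of_injective_algebraMap (algebraMap F (Module.End F (ZMod n → F))).injective p
    have hfrob : ((S : Module.End F (ZMod n → F)) - 1) ^ n = S ^ n - 1 ^ n := by
      exact sub_pow_char_pow_of_commute p m (Commute.one_right _)
    rw [hfrob]
    funext j
    have h3 : ((S ^ n - 1 ^ n : Module.End F (ZMod n → F))) x j = (S ^ n) x j - x j := by simp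
    rw [h3, hSpow]
    simp [ZMod.natCast_self]
  · -- Part 2
    have key : ∀ k : ℕ, ∃ c : ℕ → F, c 0 = (-1) ^ k ∧ (∀ i, k < i → c i = 0) ∧
        ∀ (x : ZMod n → F) (j : ZMod n),
          D^[k] x j = ∑ i ∈ Finset.range (k + 1), c i * x (j + (i : ZMod n)) := by
      intro k
      induction k with
      | zero =>
        refine ⟨fun i => if i = 0 then 1 else 0, by simp, fun i hi => by
          simp only [if_neg (by omega : i ≠ 0)], fun x j => by simp⟩
      | succ k ih =>
        obtain ⟨c, hc0, hcz, hsum⟩ := ih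
        set c' : ℕ → F := fun i => Nat.casesOn i (-(c 0)) (fun i' => c i' - c (i' + 1)) with hc'
        have hc'0 : c' 0 = -(c 0) := rfl
        have hc's : ∀ i : ℕ, c' (i + 1) = c i - c (i + 1) := fun i => rfl
        refine ⟨c', by rw [hc'0, hc0]; ring, ?_, ?_⟩
        · intro i hi
          match i, hi with
          | Nat.succ i', hi =>
            rw [hc's, hcz i' (by omega), hcz (i' + 1) (by omega), sub_zero]
        · intro x j
          rw [Function.iterate_succ_apply']
          show D^[k] x (j + 1) - D^[k] x j = _
          rw [hsum, hsum,
            Finset.sum_range_succ' (fun i => c' i * x (j + (i : ZMod n))) (k + 1)]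
          have hcast : ∀ i : ℕ, j + 1 + (i : ZMod n) = j + ((i + 1 : ℕ) : ZMod n) := by
            intro i; push_cast; ring
          have hT : ∑ i ∈ Finset.range (k + 1), c i * x (j + (i : ZMod n))
              = (∑ i ∈ Finset.range (k + 1), c (i + 1) * x (j + ((i + 1 : ℕ) : ZMod n)))
                + c 0 * x (j + ((0 : ℕ) : ZMod n)) := by
            have h1 := Finset.sum_range_succ (fun i => c i * x (j + (i : ZMod n))) (k + 1)
            have h2 := Finset.sum_range_succ' (fun i => c i * x (j + (i : ZMod n))) (k + 1)
            rw [h1, hcz (k + 1) (lt_add_one k), zero_mul, add_zero] at h2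
            exact h2
          have hsplit : ∑ i ∈ Finset.range (k + 1), c' (i + 1) * x (j + ((i + 1 : ℕ) : ZMod n))
              = (∑ i ∈ Finset.range (k + 1), c i * x (j + ((i + 1 : ℕ) : ZMod n)))
                - ∑ i ∈ Finset.range (k + 1), c (i + 1) * x (j + ((i + 1 : ℕ) : ZMod n)) := by
            rw [← Finset.sum_sub_distrib]
            refine Finset.sum_congr rfl fun i _ => ?_
            rw [hc's]; ring
          rw [hsplit, hc'0]
          simp only [hcast] at *
          rw [hT]
          ring
    obtain ⟨c, hc0, hcz, hsum⟩ := key (n - 1)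
    refine ⟨fun i => if i = 0 then (1 : F) else 0, fun h => ?_⟩
    have h0 := congr_fun h 0
    rw [hsum] at h0
    have hn1 : n - 1 + 1 = n := Nat.succ_pred_eq_of_pos (NeZero.pos n)
    rw [hn1] at h0
    have heval : ∑ i ∈ Finset.range n,
        c i * (if ((0 : ZMod n) + (i : ZMod n) = 0) then (1 : F) else 0) = c 0 := by
      rw [Finset.sum_eq_single 0]
      · simp
      · intro i hi hine
        have hne : ((i : ZMod n)) ≠ 0 := by
          rw [Ne, ZMod.natCast_eq_zero_iff]
          intro hdvd
          exact hine (Nat.eq_zero_of_dvd_of_lt hdvd (Finset.mem_range.mp hi))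
        simp [hne]
      · intro h0'
        exact absurd (Finset.mem_range.mpr (NeZero.pos n)) h0'
    rw [heval] at h0
    rw [hc0] at h0
    simp only [Pi.zero_apply] at h0
    exact pow_ne_zero _ (neg_ne_zero.mpr (one_ne_zero : (1 : F) ≠ 0)) h0
end

section
/- If the characteristic p of F_q does not divide n, then ker(Δ^2) = ker(Δ); that is, if Δ(Δx) = 0 then Δx = 0. -/
theorem stmt_8 (p n : ℕ) (hn : 0 < n) (F : Type*) [Field F] [Fintype F]
    [CharP F p] (hpn : ¬ p ∣ n) (x : ZMod n → F) :
    (fun j => (x (j + 1 + 1) - x (j + 1)) - (x (j + 1) - x j)) = (0 : ZMod n → F) ↔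
    (fun j => x (j + 1) - x j) = (0 : ZMod n → F) := by
  haveI : NeZero n := ⟨hn.ne'⟩
  set y : ZMod n → F := fun j => x (j + 1) - x j with hy
  constructor
  · intro h
    have hstep : ∀ j : ZMod n, y (j + 1) = y j := by
      intro j
      have := congrFun h j
      simp only [Pi.zero_apply, sub_eq_zero] at this
      simpa [hy] using this
    have hconst : ∀ j : ZMod n, y j = y 0 := by
      intro j
      obtain ⟨k, rfl⟩ := ZMod.natCast_rightInverse.surjective j
      induction k with
      | zero => simp
      | succ m ih =>
        push_cast
        rw [hstep, ih]
    -- telescoping sum is zero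
    have hsum : ∑ j : ZMod n, y j = 0 := by
      have : ∑ j : ZMod n, x (j + 1) = ∑ j : ZMod n, x j :=
        Fintype.sum_equiv (Equiv.addRight (1 : ZMod n)) _ _ (fun j => rfl)
      simp [hy, Finset.sum_sub_distrib, this]
    have hcard : (n : F) * y 0 = 0 := by
      calc (n : F) * y 0 = ∑ _j : ZMod n, y 0 := by
            simp [Finset.card_univ, ZMod.card, mul_comm]
        _ = ∑ j : ZMod n, y j := Finset.sum_congr rfl fun j _ => (hconst j).symm
        _ = 0 := hsum
    have hn0 : (n : F) ≠ 0 := by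
      rw [Ne, CharP.cast_eq_zero_iff F p]
      exact hpn
    have hz : y 0 = 0 := (mul_eq_zero.mp hcard).resolve_left hn0
    funext j
    exact (hconst j).trans hz
  · intro h
    funext j
    have h1 := congrFun h (j + 1)
    have h2 := congrFun h j
    simp only [Pi.zero_apply] at h1 h2 ⊢
    show y (j + 1) - y j = 0
    rw [h1, h2, sub_zero]
end

section
/- Write n = p^m · n' with p ∤ n', where p is the characteristic of F_q, and set h = p^m. Then ker(Δ^{h+1}) = ker(Δ^h), i.e., the kernels of the iterates of Δ stabilize after h steps. -/
theorem stmt_9 (p n m : ℕ) (hn : 0 < n) (F : Type*) [Field F] [Fintype F]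
    [CharP F p] (hdvd : p ^ m ∣ n) (hndvd : ¬ p ^ (m + 1) ∣ n)
    (x : ZMod n → F) :
    (fun (y : ZMod n → F) => fun j => y (j + 1) - y j)^[p ^ m + 1] x = 0 ↔
    (fun (y : ZMod n → F) => fun j => y (j + 1) - y j)^[p ^ m] x = 0 := by
  haveI : NeZero n := ⟨hn.ne'⟩
  haveI : Fact p.Prime := ⟨CharP.char_is_prime F p⟩
  set T : (ZMod n → F) →ₗ[F] (ZMod n → F) :=
    { toFun := fun y j => y (j + 1), map_add' := fun a b => rfl,
      map_smul' := fun c a => rfl } with hT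
  have hcoe : (fun (y : ZMod n → F) => fun j => y (j + 1) - y j) = ⇑(T - 1) := by
    funext y j; simp [hT]
  haveI : CharP (Module.End F (ZMod n → F)) p :=
    charP_of_injective_algebraMap (algebraMap F (Module.End F (ZMod n → F))).injective p
  -- T^k acts as shift by k
  have hTk : ∀ (k : ℕ) (y : ZMod n → F) (j : ZMod n), (T ^ k) y j = y (j + (k : ZMod n)) := by
    intro k
    induction k with
    | zero => intro y j; simp
    | succ k ih =>
      intro y j
      rw [pow_succ', Module.End.mul_apply]
      show ((T ^ k) y) (j + 1) = _
      rw [ih]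
      push_cast
      ring_nf
  have hfrob : (T - 1) ^ p ^ m = T ^ p ^ m - 1 := by
    have := sub_pow_char_pow_of_commute (Commute.one_right T) (p := p) (n := m)
    simpa using this
  -- iterates as powers
  have hiter : ∀ k : ℕ, (fun (y : ZMod n → F) => fun j => y (j + 1) - y j)^[k] x
      = ((T - 1) ^ k) x := by
    intro k; rw [hcoe, ← Module.End.pow_apply]
  constructor
  · intro h
    rw [hiter] at h ⊢
    set z : ZMod n → F := ((T - 1) ^ p ^ m) x with hz
    have hz' : ∀ j : ZMod n, z j = x (j + (p ^ m : ZMod n)) - x j := by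
      intro j; rw [hz, hfrob]; simp [hTk]
    have hΔz : (T - 1) z = 0 := by
      rw [hz, ← Module.End.mul_apply, ← pow_succ']
      exact h
    have hconst : ∀ j : ZMod n, z j = z 0 := by
      have step : ∀ j : ZMod n, z (j + 1) = z j := by
        intro j
        have := congr_fun hΔz j
        simp [hT] at this
        exact sub_eq_zero.mp this
      have natc : ∀ k : ℕ, z (k : ZMod n) = z 0 := by
        intro k
        induction k with
        | zero => simp
        | succ k ih => push_cast; rw [step, ih]
      intro j
      calc z j = z ((j.val : ℕ) : ZMod n) := by rw [ZMod.natCast_val, ZMod.cast_id]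
      _ = z 0 := natc _
    -- telescoping sum
    obtain ⟨n', hn'⟩ := hdvd
    have hpn' : ¬ p ∣ n' := by
      intro ⟨c, hc⟩
      exact hndvd ⟨c, by rw [hn', hc, pow_succ]; ring⟩
    have hsum : ∀ j : ZMod n, (n' : F) * z 0 = 0 := by
      intro j
      have tele : ∑ k ∈ Finset.range n',
          (x (j + ((k + 1) * p ^ m : ℕ)) - x (j + (k * p ^ m : ℕ)))
          = x (j + (n' * p ^ m : ℕ)) - x (j + (0 * p ^ m : ℕ)) :=
        Finset.sum_range_sub (fun k => x (j + (k * p ^ m : ℕ))) n'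
      have each : ∀ k ∈ Finset.range n',
          x (j + ((k + 1) * p ^ m : ℕ)) - x (j + (k * p ^ m : ℕ)) = z 0 := by
        intro k _
        rw [← hconst (j + (k * p ^ m : ℕ)), hz' (j + (k * p ^ m : ℕ))]
        congr 1
        push_cast
        ring_nf
      rw [Finset.sum_congr rfl each, Finset.sum_const, Finset.card_range,
        nsmul_eq_mul] at tele
      have : ((n' * p ^ m : ℕ) : ZMod n) = 0 := by
        rw [← ZMod.natCast_self n, hn']; push_cast; ring_nf
      rw [this] at tele
      simpa using tele
    have hz0 : z 0 = 0 := by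
      have hcn : (n' : F) ≠ 0 := fun hc => hpn' ((CharP.cast_eq_zero_iff F p n').mp hc)
      have := hsum 0
      exact (mul_eq_zero.mp this).resolve_left hcn
    funext j
    rw [hconst j, hz0]; rfl
  · intro h
    rw [hiter] at h ⊢
    rw [pow_succ', Module.End.mul_apply, h]
    simp
end

section
/- Write n = p^m · n' with p ∤ n' and h = p^m. Then the kernel of Δ^h has exactly q^h elements. -/
/-!
Write `Δ = σ - 1` with `σ` the shift `y ↦ y (· + 1)`. In characteristic `p` the binomial
theorem collapses to `Δ ^ p ^ m = σ ^ p ^ m - 1`, so the kernel of `Δ ^ p ^ m` consists of the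
`p ^ m`-periodic functions on `ZMod n`. As `p ^ m ∣ n`, these are exactly the pullbacks of
functions on `ZMod (p ^ m)` along the surjection `ZMod n → ZMod (p ^ m)`, and there are
`q ^ p ^ m` of those.
-/

open Function

theorem algebraMap_end_pi_injective {ι R : Type*} [CommRing R] [Nonempty ι] :
    Injective (algebraMap R (Module.End R (ι → R))) := fun c d hcd => by
  simpa using congrFun (LinearMap.congr_fun hcd fun _ => 1) (Classical.arbitrary ι)

section ShiftOperator

variable {G R : Type*} [AddMonoid G] [CommRing R]

def shiftLinear (g : G) : Module.End R (G → R) := LinearMap.funLeft R R (· + g)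

theorem shiftLinear_pow_apply (g : G) (k : ℕ) (x : G → R) :
    (shiftLinear g ^ k) x = fun j => x (j + k • g) := by
  induction k generalizing x with
  | zero => ext; simp
  | succ k ih =>
    ext j
    rw [pow_succ, Module.End.mul_apply, ih]
    simp [shiftLinear, succ_nsmul, add_assoc]

theorem iterate_sub_shift_char_pow (p m : ℕ) [Fact p.Prime] [CharP R p] (g : G) (x : G → R) :
    (fun y j => y (j + g) - y j)^[p ^ m] x = fun j => x (j + p ^ m • g) - x j := by
  have : CharP (Module.End R (G → R)) p :=
    charP_of_injective_algebraMap algebraMap_end_pi_injective p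
  have hΔ : (fun (y : G → R) j => y (j + g) - y j) = ⇑(shiftLinear (R := R) g - 1) := rfl
  rw [hΔ, ← Module.End.pow_apply, sub_pow_char_pow_of_commute p m (Commute.one_right _), one_pow,
    LinearMap.sub_apply, shiftLinear_pow_apply]
  rfl

end ShiftOperator

section PeriodicZMod

open ZMod

variable {α : Type*} {n h : ℕ}

theorem Function.Periodic.eq_of_castHom_eq {x : ZMod n → α}
    (hx : Periodic x (h : ZMod n)) (hdvd : h ∣ n) {a b : ZMod n}
    (hab : castHom hdvd (ZMod h) a = castHom hdvd (ZMod h) b) : x a = x b := by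
  obtain ⟨z, hz⟩ := intCast_surjective (a - b)
  have hz_dvd : (h : ℤ) ∣ z := by
    rw [← intCast_zmod_eq_zero_iff_dvd, ← map_intCast (castHom hdvd (ZMod h)), hz, map_sub, hab,
      sub_self]
  obtain ⟨k, rfl⟩ := hz_dvd
  have ha : a = b + k • (h : ZMod n) := by
    rw [← sub_eq_iff_eq_add', ← hz]; push_cast; ring
  rw [ha, (hx.zsmul k) b]

noncomputable def ZMod.periodicEquiv (hdvd : h ∣ n) :
    (ZMod h → α) ≃ {x : ZMod n → α // Periodic x (h : ZMod n)} :=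
  Equiv.ofBijective (fun y => ⟨y ∘ castHom hdvd (ZMod h), fun j => by
    rw [comp_apply, comp_apply, map_add, map_natCast, natCast_self, add_zero]⟩) <| by
    refine ⟨fun y y' hyy' => (castHom_surjective hdvd).injective_comp_right
      (congrArg Subtype.val hyy'), fun ⟨x, hx⟩ => ⟨x ∘ surjInv (castHom_surjective hdvd), ?_⟩⟩
    ext j
    exact hx.eq_of_castHom_eq hdvd (surjInv_eq _ _)

end PeriodicZMod

theorem stmt_10_general (q p n m : ℕ) (F : Type*) [Field F] [Fintype F]
    [CharP F p] (hq : Fintype.card F = q)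
    (hdvd : p ^ m ∣ n) :
    Nat.card {x : ZMod n → F //
      (fun (y : ZMod n → F) => fun j => y (j + 1) - y j)^[p ^ m] x = 0} = q ^ (p ^ m) := by
  have hp : Fact p.Prime := ⟨CharP.char_is_prime F p⟩
  have : NeZero (p ^ m) := ⟨pow_ne_zero _ hp.out.ne_zero⟩
  have hker : ∀ x : ZMod n → F, (fun (y : ZMod n → F) => fun j => y (j + 1) - y j)^[p ^ m] x = 0 ↔
      Periodic x ((p ^ m : ℕ) : ZMod n) := fun x => by
    simp only [iterate_sub_shift_char_pow, funext_iff, Pi.zero_apply, sub_eq_zero, nsmul_one]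
    rfl
  rw [Nat.card_congr (Equiv.subtypeEquivRight hker), ← Nat.card_congr (ZMod.periodicEquiv hdvd),
    Nat.card_eq_fintype_card, Fintype.card_fun, ZMod.card, hq]

theorem stmt_10 (q p n m : ℕ) (hn : 0 < n) (F : Type*) [Field F] [Fintype F]
    [CharP F p] (hq : Fintype.card F = q)
    (hdvd : p ^ m ∣ n) (hndvd : ¬ p ^ (m + 1) ∣ n) :
    Nat.card {x : ZMod n → F //
      (fun (y : ZMod n → F) => fun j => y (j + 1) - y j)^[p ^ m] x = 0} = q ^ (p ^ m) :=
  stmt_10_general q p n m F hq hdvd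
end

section
/- With h = p^m the largest power of the characteristic p dividing n, the space F_q^n decomposes as an internal direct sum: F_q^n = ker(Δ^h) ⊕ im(Δ^h). -/
/-!
Write `Δ = S - 1` for the cyclic shift `S`, so `S ^ n = 1`. In characteristic `p` the Frobenius
identity gives `Δ ^ p ^ m = U - 1` with `U = S ^ p ^ m` (in characteristic `0` necessarily
`m = 0`), and `U ^ k = 1` for `k = n / p ^ m`, which is invertible in `F` because `p ∤ k`. For an operator of order dividing an invertible `k`, the geometric
sum `∑ U ^ i` kills `range (U - 1)` and acts as `k` on `ker (U - 1)`, so the two meet trivially;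
rank–nullity then makes them complementary.
-/

open LinearMap

theorem Module.End.isCompl_ker_sub_one_range_sub_one {K V : Type*} [Field K] [AddCommGroup V]
    [Module K V] [FiniteDimensional K V] {U : Module.End K V} {k : ℕ} (hU : U ^ k = 1)
    (hk : (k : K) ≠ 0) : IsCompl (ker (U - 1)) (range (U - 1)) := by
  refine (Submodule.isCompl_iff_disjoint _ _ ?_).mpr ?_
  · rw [add_comm, finrank_range_add_finrank_ker]
  rw [Submodule.disjoint_def]
  rintro _ hy ⟨x, rfl⟩
  set y := (U - 1) x
  have hfix : Function.IsFixedPt U y := sub_eq_zero.mp hy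
  have hsmul : (k : K) • y = 0 :=
    calc (k : K) • y = (∑ i ∈ Finset.range k, U ^ i) y := by
          simp [LinearMap.sum_apply, Module.End.pow_apply, Function.iterate_fixed hfix,
            Nat.cast_smul_eq_nsmul]
      _ = ((∑ i ∈ Finset.range k, U ^ i) * (U - 1)) x := rfl
      _ = 0 := by rw [geom_sum_mul, hU, sub_self, LinearMap.zero_apply]
  exact (smul_eq_zero.mp hsmul).resolve_left hk

section CyclicShift

variable (R M : Type*) [Semiring R] [AddCommMonoid M] [Module R M] (n : ℕ)

def cyclicShift : Module.End R (ZMod n → M) := funLeft R M (· + 1)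

variable {R M n}

theorem cyclicShift_pow_apply (k : ℕ) (x : ZMod n → M) (i : ZMod n) :
    (cyclicShift R M n ^ k) x i = x (i + k) := by
  induction k generalizing i with
  | zero => simp
  | succ k ih =>
    rw [pow_succ', Module.End.mul_apply]
    change (cyclicShift R M n ^ k) x (i + 1) = _
    rw [ih]
    push_cast
    ring_nf

theorem cyclicShift_pow_self : cyclicShift R M n ^ n = 1 := by
  ext x i
  simp [cyclicShift_pow_apply]

end CyclicShift

theorem stmt_11_general (p n m : ℕ) (F : Type*) [Field F]
    [CharP F p] (hdvd : p ^ m ∣ n) (hndvd : ¬ p ^ (m + 1) ∣ n)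
    (Δ : Module.End F (ZMod n → F))
    (hΔ : ∀ (x : ZMod n → F) (i : ZMod n), Δ x i = x (i + 1) - x i) :
    IsCompl (LinearMap.ker (Δ ^ (p ^ m))) (LinearMap.range (Δ ^ (p ^ m))) := by
  have hn0 : n ≠ 0 := by rintro rfl; exact hndvd (dvd_zero _)
  have : NeZero n := ⟨hn0⟩
  have hΔS : Δ = cyclicShift F F n - 1 := by
    ext x i
    simp [hΔ, cyclicShift]
  have hΔpow : Δ ^ p ^ m = cyclicShift F F n ^ p ^ m - 1 := by
    rcases CharP.char_is_prime_or_zero F p with hp | rfl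
    · have : Fact p.Prime := ⟨hp⟩
      have : CharP (Module.End F (ZMod n → F)) p := charP_of_injective_algebraMap' F p
      rw [hΔS, sub_pow_char_pow_of_commute _ _ (Commute.one_right _), one_pow]
    · obtain rfl : m = 0 := by
        by_contra hm
        rw [zero_pow hm, zero_dvd_iff] at hdvd
        exact hn0 hdvd
      simp [hΔS]
  obtain ⟨k, hk⟩ := hdvd
  have hkF : (k : F) ≠ 0 := by
    rw [Ne, CharP.cast_eq_zero_iff F p]
    rintro ⟨c, rfl⟩
    exact hndvd ⟨c, by rw [hk, pow_succ, mul_assoc]⟩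
  rw [hΔpow]
  exact Module.End.isCompl_ker_sub_one_range_sub_one
    (by rw [← pow_mul, ← hk, cyclicShift_pow_self]) hkF

theorem stmt_11 (p n m : ℕ) (hn : 0 < n) (F : Type*) [Field F] [Fintype F]
    [CharP F p] (hdvd : p ^ m ∣ n) (hndvd : ¬ p ^ (m + 1) ∣ n)
    (Δ : Module.End F (ZMod n → F))
    (hΔ : ∀ (x : ZMod n → F) (i : ZMod n), Δ x i = x (i + 1) - x i) :
    IsCompl (LinearMap.ker (Δ ^ (p ^ m))) (LinearMap.range (Δ ^ (p ^ m))) :=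
  stmt_11_general p n m F hdvd hndvd Δ hΔ
end

section
/- Call x periodic (for Δ) if there exists k ≥ 1 with Δ^k x = x. Then x is periodic if and only if x ∈ im(Δ^h), where h is the largest power of the characteristic p dividing n. -/
section Aux

variable (n : ℕ) (F : Type*) [Field F]

/-- The shift operator as a linear endomorphism. -/
private def shiftL : Module.End F (ZMod n → F) where
  toFun y := fun j => y (j + 1)
  map_add' _ _ := rfl
  map_smul' _ _ := rfl

/-- The difference operator as a linear endomorphism. -/
private def DL : Module.End F (ZMod n → F) := shiftL n F - 1

variable {n F}

private lemma DL_coe : ⇑(DL n F) = fun (y : ZMod n → F) => fun j => y (j + 1) - y j := rfl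

private lemma iterate_eq_pow (k : ℕ) (x : ZMod n → F) :
    (fun (y : ZMod n → F) => fun j => y (j + 1) - y j)^[k] x = ((DL n F) ^ k) x := by
  rw [Module.End.pow_apply, ← DL_coe]

private lemma shiftL_pow (k : ℕ) (y : ZMod n → F) (j : ZMod n) :
    ((shiftL n F) ^ k) y j = y (j + (k : ZMod n)) := by
  induction k generalizing y j with
  | zero => simp
  | succ k ih =>
    rw [pow_succ']
    show ((shiftL n F) ^ k) y (j + 1) = _
    rw [ih]
    push_cast
    ring_nf

end Aux

theorem stmt_13 (p n m : ℕ) (hn : 0 < n) (F : Type*) [Field F] [Fintype F]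
    [CharP F p] (hdvd : p ^ m ∣ n) (hndvd : ¬ p ^ (m + 1) ∣ n)
    (x : ZMod n → F) :
    (∃ k, 1 ≤ k ∧ (fun (y : ZMod n → F) => fun j => y (j + 1) - y j)^[k] x = x) ↔
    (∃ z : ZMod n → F,
      (fun (y : ZMod n → F) => fun j => y (j + 1) - y j)^[p ^ m] z = x) := by
  haveI : NeZero n := ⟨hn.ne'⟩
  haveI : Fact p.Prime := ⟨CharP.char_is_prime F p⟩
  set q := p ^ m with hq
  have hq1 : 1 ≤ q := Nat.one_le_pow _ _ (Fact.out (p := p.Prime)).pos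
  set D := DL n F with hD
  simp only [iterate_eq_pow, ← hD]
  constructor
  · rintro ⟨k, hk1, hkx⟩
    -- x = D^(k*q) x, so x ∈ range of D^q
    have hiter : ∀ t : ℕ, (D ^ (k * t)) x = x := by
      intro t
      induction t with
      | zero => simp
      | succ t ih => rw [Nat.mul_succ, pow_add, Module.End.mul_apply, hkx, ih]
    refine ⟨(D ^ (k * q - q)) x, ?_⟩
    rw [← Module.End.mul_apply, ← pow_add]
    have hle : q ≤ k * q := Nat.le_mul_of_pos_left q hk1
    rw [Nat.add_sub_cancel' hle, hiter q]
  · rintro ⟨z, hz⟩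
    -- Setup: char p on End, Frobenius identity
    have hinj : Function.Injective (algebraMap F (Module.End F (ZMod n → F))) := by
      intro a b h
      have := congrFun (congrArg (fun (f : Module.End F (ZMod n → F)) =>
        f (fun _ => (1 : F))) h) 0
      simpa [Module.algebraMap_end_apply] using this
    haveI : CharP (Module.End F (ZMod n → F)) p := charP_of_injective_ringHom hinj p
    have hfrob : D ^ q = (shiftL n F) ^ q - 1 := by
      rw [hD, DL, hq, sub_pow_char_pow_of_commute _ _ (Commute.one_right _), one_pow]
    have hDq_apply : ∀ (w : ZMod n → F) (j : ZMod n),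
        (D ^ q) w j = w (j + (q : ZMod n)) - w j := by
      intro w j
      rw [hfrob]
      show ((shiftL n F) ^ q) w j - w j = _
      rw [shiftL_pow]
    -- p ∤ n/q and n/q ≠ 0 in F
    set n' := n / q with hn'
    have hqn' : q * n' = n := Nat.mul_div_cancel' hdvd
    have hpn' : ¬ p ∣ n' := by
      intro hpd
      obtain ⟨c, hc⟩ := hpd
      exact hndvd ⟨c, by rw [← hqn', hc, hq]; ring⟩
    have hn'F : (n' : F) ≠ 0 := by
      rw [Ne, CharP.cast_eq_zero_iff F p]
      exact hpn'
    -- Key: if D^q w is a constant function then it is zero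
    have hkey : ∀ w : ZMod n → F, (∀ j, (D ^ q) w j = (D ^ q) w 0) → (D ^ q) w = 0 := by
      intro w hw
      have hw' : ∀ j, w (j + (q : ZMod n)) - w j = (D ^ q) w 0 := by
        intro j; rw [← hDq_apply, hw j]
      have htel : ∀ t : ℕ, w (((t * q : ℕ) : ZMod n)) - w 0 = t • ((D ^ q) w 0) := by
        intro t
        induction t with
        | zero => simp
        | succ t ih =>
          have h1 : (((t + 1) * q : ℕ) : ZMod n) = ((t * q : ℕ) : ZMod n) + (q : ZMod n) := by
            push_cast; ring
          have h2 := hw' ((t * q : ℕ) : ZMod n)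
          rw [h1, succ_nsmul, ← ih, ← h2]
          ring
      have h0 : ((n' * q : ℕ) : ZMod n) = 0 := by
        rw [mul_comm, hqn']; exact ZMod.natCast_self n
      have := htel n'
      rw [h0, sub_self, nsmul_eq_mul] at this
      have hc0 : (D ^ q) w 0 = 0 := by
        rcases mul_eq_zero.mp this.symm with h | h
        · exact absurd h hn'F
        · exact h
      funext j
      rw [hw j, hc0]; rfl
    -- D y = 0 implies y is constant
    have hconst : ∀ y : ZMod n → F, D y = 0 → ∀ j, y j = y 0 := by
      intro y hy j
      have hy' : ∀ j : ZMod n, y (j + 1) = y j := by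
        intro j
        have := congrFun hy j
        rw [DL_coe] at this
        simpa [sub_eq_zero] using this
      obtain ⟨i, rfl⟩ := ZMod.natCast_zmod_surjective j
      induction i with
      | zero => norm_num
      | succ i ih =>
        have : ((i + 1 : ℕ) : ZMod n) = (i : ZMod n) + 1 := by push_cast; ring
        rw [this, hy', ih]
    -- injectivity of D on the range of D^q
    have hker : ∀ w : ZMod n → F, (∀ u, w ≠ (D ^ q) u → True) → True := fun _ _ => trivial
    have hinjW : ∀ u : ZMod n → F, D ((D ^ q) u) = 0 → (D ^ q) u = 0 := by
      intro u hu
      apply hkey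
      intro j
      exact hconst _ hu j
    -- the restriction of D to W := range (D^q) is a permutation
    set W : Set (ZMod n → F) := Set.range (⇑(D ^ q)) with hW
    have hmem : ∀ w ∈ W, D w ∈ W := by
      rintro w ⟨u, rfl⟩
      exact ⟨D u, by rw [← Module.End.mul_apply, ← Module.End.mul_apply, ← pow_succ, ← pow_succ']⟩
    let e : W → W := fun w => ⟨D w.val, hmem w.val w.2⟩
    have he_inj : Function.Injective e := by
      rintro ⟨w₁, u₁, rfl⟩ ⟨w₂, u₂, rfl⟩ h
      have h' : D ((D ^ q) u₁) - D ((D ^ q) u₂) = 0 := by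
        rw [sub_eq_zero]; exact congrArg Subtype.val h
      have h'' : D ((D ^ q) (u₁ - u₂)) = 0 := by
        rw [map_sub, map_sub, h']
      have := hinjW (u₁ - u₂) h''
      rw [map_sub, sub_eq_zero] at this
      exact Subtype.ext this
    haveI : Finite (ZMod n → F) := inferInstance
    haveI : Finite W := Subtype.finite

    have he_bij : Function.Bijective e := Finite.injective_iff_bijective.mp he_inj
    let π : Equiv.Perm W := Equiv.ofBijective e he_bij
    have hπ : ∀ (t : ℕ) (w : W), ((π ^ t) w).val = (D ^ t) w.val := by
      intro t
      induction t with
      | zero => intro w; simp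
      | succ t ih =>
        intro w
        rw [pow_succ', Equiv.Perm.mul_apply]
        show (D ((π ^ t) w).val) = _
        rw [ih, pow_succ', Module.End.mul_apply]
    set k := Nat.card (Equiv.Perm W) with hk
    have hkpos : 1 ≤ k := Nat.card_pos
    have hπk : π ^ k = 1 := pow_card_eq_one'
    refine ⟨k, hkpos, ?_⟩
    have hxW : x ∈ W := ⟨z, hz⟩
    have := hπ k ⟨x, hxW⟩
    rw [hπk] at this
    exact this.symm ▸ rfl
end

section
/- The number of periodic points of Δ on F_q^n is exactly q^{n - h}, where h is the largest power of the characteristic p dividing n. (A point x is periodic if Δ^k x = x for some k ≥ 1.) -/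
set_option linter.unusedSectionVars false

noncomputable def sig (n : ℕ) (F : Type*) [Field F] : Module.End F (ZMod n → F) :=
  LinearMap.funLeft F F (fun j => j + 1)

lemma sig_pow_apply {n : ℕ} {F : Type*} [Field F] (k : ℕ) (x : ZMod n → F) (j : ZMod n) :
    ((sig n F ^ k) x) j = x (j + (k : ZMod n)) := by
  induction k generalizing j with
  | zero => simp
  | succ k ih =>
    rw [pow_succ']
    have h : ((sig n F * sig n F ^ k) x) j = ((sig n F ^ k) x) (j + 1) := rfl
    rw [h, ih]; congr 1; push_cast; ring

lemma sig_pow_n {n : ℕ} {F : Type*} [Field F] : sig n F ^ n = 1 := by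
  apply LinearMap.ext; intro x; funext j
  rw [sig_pow_apply]; simp [ZMod.natCast_self]

theorem stmt_14 (q p n m : ℕ) (hn : 0 < n) (F : Type*) [Field F] [Fintype F]
    [CharP F p] (hq : Fintype.card F = q)
    (hdvd : p ^ m ∣ n) (hndvd : ¬ p ^ (m + 1) ∣ n) :
    Nat.card {x : ZMod n → F // ∃ k, 1 ≤ k ∧
      (fun (y : ZMod n → F) => fun j => y (j + 1) - y j)^[k] x = x} = q ^ (n - p ^ m) := by
  haveI : NeZero n := ⟨hn.ne'⟩
  have hp : p.Prime := CharP.char_is_prime F p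
  haveI : Fact p.Prime := ⟨hp⟩
  haveI : NeZero (p ^ m) := ⟨pow_ne_zero m hp.pos.ne'⟩
  set r := n / p ^ m with hrdef
  have hnr : n = p ^ m * r := (Nat.mul_div_cancel' hdvd).symm
  have hr0 : 0 < r := by
    rcases Nat.eq_zero_or_pos r with h | h
    · rw [h, mul_zero] at hnr; omega
    · exact h
  have hpr : ¬ p ∣ r := by
    intro h
    exact hndvd (by rw [pow_succ, hnr]; exact mul_dvd_mul_left _ h)
  have hrF : (r : F) ≠ 0 := by
    rw [Ne, CharP.cast_eq_zero_iff F p]; exact hpr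
  -- operators
  set V := (ZMod n → F) with hV
  set σ : Module.End F V := sig n F with hσ
  haveI : Nontrivial (Module.End F V) := by
    exact ⟨0, 1, fun h => one_ne_zero (α := F)
      (congrFun (congrArg (fun f : Module.End F V => f (fun _ => (1:F))) h.symm) 0)⟩
  haveI : CharP (Module.End F V) p :=
    charP_of_injective_ringHom (algebraMap F (Module.End F V)).injective p
  set U : Module.End F V := σ ^ p ^ m with hU
  have hUr : U ^ r = 1 := by rw [hU, ← pow_mul, ← hnr, hσ]; exact sig_pow_n
  set Δ : Module.End F V := σ - 1 with hΔ
  have hT : Δ ^ p ^ m = U - 1 := by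
    rw [hΔ, sub_pow_char_pow_of_commute _ _ (Commute.one_right σ), one_pow, hU]
  set g : Module.End F V := ∑ i ∈ Finset.range r, U ^ i with hg
  have hgT : g * (U - 1) = 0 := by rw [hg, geom_sum_mul, hUr, sub_self]
  have hTg : (U - 1) * g = 0 := by rw [hg, mul_geom_sum, hUr, sub_self]
  have hgU : ∀ i : ℕ, g * U ^ i = g := by
    intro i
    have h1 : g * (U ^ i - 1) = 0 := by
      rw [← mul_geom_sum U i, ← mul_assoc, hgT, zero_mul]
    rw [mul_sub, mul_one, sub_eq_zero] at h1
    exact h1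
  have hgg : g * g = (r : ℕ) • g := by
    nth_rw 2 [hg]
    rw [Finset.mul_sum]
    simp [hgU, Finset.sum_const]
  set H : Module.End F V := ∑ i ∈ Finset.range r, ∑ j ∈ Finset.range i, U ^ j with hH
  have hgH : g = (U - 1) * H + (r : ℕ) • 1 := by
    rw [hH, Finset.mul_sum]
    have h1 : ∀ i, (U - 1) * ∑ j ∈ Finset.range i, U ^ j = U ^ i - 1 :=
      fun i => mul_geom_sum U i
    calc g = ∑ i ∈ Finset.range r, ((U ^ i - 1) + 1) := by simp [hg]
    _ = (∑ i ∈ Finset.range r, (U ^ i - 1)) + (r:ℕ) • 1 := by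
        rw [Finset.sum_add_distrib, Finset.sum_const, Finset.card_range]
    _ = _ := by rw [← Finset.sum_congr rfl (fun i _ => h1 i)]
  have hcommTH : Commute (U - 1) H := by
    apply Commute.sum_right
    intro i _
    apply Commute.sum_right
    intro j _
    exact ((Commute.refl U).pow_right j).sub_left ((Commute.one_left (U ^ j)))
  -- submodules
  set A := LinearMap.ker (U - 1) with hA
  set B := LinearMap.ker g with hB
  have hzero_of_mem : ∀ x : V, (U - 1) x = 0 → g x = 0 → x = 0 := by
    intro x h1 h2
    have h3 : g x = ((U - 1) * H) x + (r : ℕ) • x := by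
      rw [hgH]; simp
    rw [h2, hcommTH.eq] at h3
    have h4 : (H * (U - 1)) x = H ((U - 1) x) := rfl
    rw [h4, h1, map_zero] at h3
    have h5 : (r : ℕ) • x = 0 := by linear_combination (norm := abel) -h3
    rw [← Nat.cast_smul_eq_nsmul F] at h5
    exact (smul_eq_zero.mp h5).resolve_left hrF
  have hcompl : IsCompl A B := by
    constructor
    · rw [disjoint_iff_inf_le]
      intro x hx
      obtain ⟨h1, h2⟩ := Submodule.mem_inf.mp hx
      rw [hA, LinearMap.mem_ker] at h1
      rw [hB, LinearMap.mem_ker] at h2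
      simpa using hzero_of_mem x h1 h2
    · rw [codisjoint_iff_le_sup]
      intro x _
      refine Submodule.mem_sup.mpr ⟨(r:F)⁻¹ • g x, ?_, x - (r:F)⁻¹ • g x, ?_, by abel⟩
      · rw [hA, LinearMap.mem_ker, map_smul]
        have h1 : (U - 1) (g x) = ((U - 1) * g) x := rfl
        rw [h1, hTg]; simp
      · rw [hB, LinearMap.mem_ker, map_sub, map_smul]
        have h1 : g (g x) = (g * g) x := rfl
        have h2 : ((r : ℕ) • g) x = (r : ℕ) • (g x) := rfl
        rw [h1, hgg, h2, ← Nat.cast_smul_eq_nsmul F, smul_smul, inv_mul_cancel₀ hrF,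
          one_smul, sub_self]
  set d : V → V := fun y => fun j => y (j + 1) - y j with hd
  have hdapp : ∀ y : V, d y = Δ y := by
    intro y; funext j
    rw [hΔ, LinearMap.sub_apply]; rfl
  have hdΔ : ∀ (k : ℕ) (x : V), d^[k] x = (Δ ^ k) x := by
    intro k x
    induction k with
    | zero => simp
    | succ k ih =>
      rw [Function.iterate_succ_apply', ih, pow_succ', hdapp]
      rfl
  have hmem : ∀ x : V, (∃ k, 1 ≤ k ∧ d^[k] x = x) ↔ x ∈ B := by
    intro x
    constructor
    · rintro ⟨k, hk1, hkx⟩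
      obtain ⟨k', rfl⟩ : ∃ k', k = k' + 1 := ⟨k - 1, by omega⟩
      rw [hdΔ] at hkx
      have hiter : ∀ j : ℕ, (Δ ^ ((k' + 1) * j)) x = x := by
        intro j
        induction j with
        | zero => simp
        | succ j ih =>
          rw [Nat.mul_succ, pow_add]
          have h0 : (Δ ^ ((k'+1)*j) * Δ ^ (k'+1)) x = (Δ ^ ((k'+1)*j)) ((Δ^(k'+1)) x) := rfl
          rw [h0, hkx, ih]
      have h2 : ((U - 1) ^ (k' + 1)) x = x := by
        rw [← hT, ← pow_mul, mul_comm]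
        exact hiter _
      rw [hB, LinearMap.mem_ker]
      have h3 : g * (U - 1) ^ (k' + 1) = 0 := by
        rw [pow_succ', ← mul_assoc, hgT, zero_mul]
      calc g x = g (((U - 1) ^ (k' + 1)) x) := by rw [h2]
        _ = (g * (U - 1) ^ (k' + 1)) x := rfl
        _ = 0 := by rw [h3]; rfl
    · intro hx
      have hmaps : ∀ y : B, (U - 1) (y : V) ∈ B := by
        intro y
        have h0 : g ((U - 1) (y:V)) = (g * (U - 1)) (y:V) := rfl
        exact LinearMap.mem_ker.mpr (by rw [h0, hgT]; rfl)
      set e : B → B := fun y => ⟨(U - 1) (y : V), hmaps y⟩ with he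
      have hinj : Function.Injective e := by
        intro y z hyz
        have h1 : (U - 1) ((y:V) - z) = 0 := by
          rw [map_sub, sub_eq_zero]
          exact congrArg Subtype.val hyz
        have h2 : g ((y:V) - z) = 0 := by
          have hy := LinearMap.mem_ker.mp y.2
          have hz := LinearMap.mem_ker.mp z.2
          rw [map_sub, hy, hz, sub_self]
        have h3 := hzero_of_mem _ h1 h2
        exact Subtype.ext (by rwa [sub_eq_zero] at h3)
      obtain ⟨e', he'⟩ : ∃ e' : Equiv.Perm B, ∀ y, e' y = e y :=
        ⟨Equiv.ofBijective e (Finite.injective_iff_bijective.mp hinj), fun y => rfl⟩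
      have hpow : ∀ (j : ℕ) (y : B), (((U - 1) ^ j) (y : V)) = ((e' ^ j) y : V) := by
        intro j
        induction j with
        | zero => intro y; simp
        | succ j ih =>
          intro y
          rw [pow_succ']
          have h1 : ((U - 1) * (U - 1) ^ j) (y:V) = (U - 1) (((U-1)^j) (y:V)) := rfl
          have h2 : (e' ^ (j+1)) y = e' ((e' ^ j) y) := by
            rw [pow_succ']; rfl
          rw [h1, ih, h2, he']
      set k := orderOf e' with hk
      have hk1 : 0 < k := orderOf_pos e'
      refine ⟨p ^ m * k, Nat.one_le_iff_ne_zero.mpr (Nat.mul_ne_zero (pow_ne_zero m hp.pos.ne') hk1.ne'), ?_⟩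
      rw [hdΔ, pow_mul, hT]
      have h4 := hpow k ⟨x, hx⟩
      rw [hk, pow_orderOf_eq_one e'] at h4
      simpa using h4
  have hq0 : 0 < q := hq ▸ Fintype.card_pos
  have hcardV : Nat.card V = q ^ n := by
    rw [hV, Nat.card_fun, Nat.card_zmod, Nat.card_eq_fintype_card, hq]
  have hmemA : ∀ y : ZMod (p^m) → F,
      ((fun j => y (ZMod.castHom hdvd (ZMod (p ^ m)) j)) : V) ∈ A := by
    intro y
    apply LinearMap.mem_ker.mpr
    rw [LinearMap.sub_apply, Module.End.one_apply, sub_eq_zero]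
    funext j
    have h1 : (U ((fun j => y (ZMod.castHom hdvd (ZMod (p ^ m)) j)) : V)) j
        = y (ZMod.castHom hdvd (ZMod (p ^ m)) (j + ((p ^ m : ℕ) : ZMod n))) := by
      rw [hU, hσ]; exact sig_pow_apply _ _ _
    rw [h1, map_add, map_natCast, ZMod.natCast_self, add_zero]
  have hstep : ∀ x : V, x ∈ A → ∀ a : ℕ,
      x ((a : ZMod n)) = x (((a % p ^ m : ℕ) : ZMod n)) := by
    intro x hxA a
    have hper : ∀ j : ZMod n, x (j + ((p ^ m : ℕ) : ZMod n)) = x j := by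
      intro j
      have h1 : U x = x := by
        have h2 := LinearMap.mem_ker.mp hxA
        rwa [LinearMap.sub_apply, Module.End.one_apply, sub_eq_zero] at h2
      conv_rhs => rw [← h1]
      rw [hU, hσ, sig_pow_apply]
    induction a using Nat.strong_induction_on with
    | _ a ih =>
      by_cases hlt : a < p ^ m
      · rw [Nat.mod_eq_of_lt hlt]
      · push_neg at hlt
        have hm' : a % p ^ m = (a - p ^ m) % p ^ m := Nat.mod_eq_sub_mod hlt
        have ha : (a : ZMod n) = ((a - p ^ m : ℕ) : ZMod n) + ((p ^ m : ℕ) : ZMod n) := by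
          rw [← Nat.cast_add, Nat.sub_add_cancel hlt]
        rw [ha, hper, hm']
        exact ih _ (by have := pow_pos hp.pos m; omega)
  have hcardA : Nat.card A = q ^ p ^ m := by
    have e : A ≃ (ZMod (p ^ m) → F) := {
      toFun := fun x i => (x : V) ((i.val : ZMod n))
      invFun := fun y => ⟨(fun j => y (ZMod.castHom hdvd (ZMod (p ^ m)) j)), hmemA y⟩
      left_inv := by
        intro x
        apply Subtype.ext
        funext j
        show (x : V) ((((ZMod.castHom hdvd (ZMod (p ^ m))) j).val : ZMod n)) = (x : V) j
        have h1 : (ZMod.castHom hdvd (ZMod (p ^ m))) j = ((j.val : ℕ) : ZMod (p ^ m)) := by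
          conv_lhs => rw [← ZMod.natCast_rightInverse j]
          rw [map_natCast]
        rw [h1, ZMod.val_natCast]
        conv_rhs => rw [← ZMod.natCast_rightInverse j]
        exact (hstep (x : V) x.2 j.val).symm
      right_inv := by
        intro y
        funext i
        show y ((ZMod.castHom hdvd (ZMod (p ^ m))) ((i.val : ℕ) : ZMod n)) = y i
        rw [map_natCast, ZMod.natCast_rightInverse i] }
    rw [Nat.card_congr e, Nat.card_fun, Nat.card_zmod, Nat.card_eq_fintype_card, hq]
  have hcard : Nat.card V = Nat.card A * Nat.card B := by
    rw [← Nat.card_prod]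
    exact (Nat.card_congr (Submodule.prodEquivOfIsCompl A B hcompl).toEquiv).symm
  have hBle : p ^ m ≤ n := Nat.le_of_dvd hn hdvd
  have hcardB : Nat.card B = q ^ (n - p ^ m) := by
    have h1 : q ^ p ^ m * q ^ (n - p ^ m) = q ^ p ^ m * Nat.card B := by
      rw [← pow_add, Nat.add_sub_cancel' hBle, ← hcardV, hcard, hcardA]
    exact (Nat.eq_of_mul_eq_mul_left (pow_pos hq0 _) h1).symm
  rw [← hcardB]
  exact Nat.card_congr (Equiv.subtypeEquivRight hmem)
end

section
/- Every cyclic sequence x eventually reaches a cycle: for every x ∈ F_q^n there exist k ≥ 0 and m ≥ 1 with Δ^{k+m} x = Δ^k x; moreover one may take k = h, the largest power of the characteristic dividing n. -/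
set_option linter.unusedVariables false

noncomputable section Stmt15Aux

variable (n : ℕ) (F : Type*) [Field F]

def stmt15Shift : Module.End F (ZMod n → F) where
  toFun y := fun j => y (j + 1)
  map_add' a b := rfl
  map_smul' c a := rfl

def stmt15Delta : Module.End F (ZMod n → F) := stmt15Shift n F - 1

lemma stmt15_iter (k : ℕ) (x : ZMod n → F) :
    (fun (y : ZMod n → F) => fun j => y (j + 1) - y j)^[k] x = ((stmt15Delta n F) ^ k) x := by
  induction k with
  | zero => simp
  | succ k ih =>
    rw [Function.iterate_succ_apply', ih, pow_succ', Module.End.mul_apply]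
    rfl

lemma stmt15_shift_pow (k : ℕ) (y : ZMod n → F) (j : ZMod n) :
    ((stmt15Shift n F) ^ k) y j = y (j + k) := by
  induction k generalizing y j with
  | zero => simp
  | succ k ih =>
    rw [pow_succ, Module.End.mul_apply, ih]
    show y (j + ↑k + 1) = _
    congr 1
    push_cast
    ring

end Stmt15Aux

theorem stmt_15 (p n m : ℕ) (hn : 0 < n) (F : Type*) [Field F] [Fintype F]
    [CharP F p] (hdvd : p ^ m ∣ n) (hndvd : ¬ p ^ (m + 1) ∣ n)
    (x : ZMod n → F) :
    ∃ k, 1 ≤ k ∧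
      (fun (y : ZMod n → F) => fun j => y (j + 1) - y j)^[p ^ m + k] x =
      (fun (y : ZMod n → F) => fun j => y (j + 1) - y j)^[p ^ m] x := by
  have : NeZero n := ⟨hn.ne'⟩
  have hp : Fact p.Prime := ⟨CharP.char_is_prime F p⟩
  haveI : CharP (Module.End F (ZMod n → F)) p :=
    charP_of_injective_ringHom (algebraMap F (Module.End F (ZMod n → F))).injective p
  set S := stmt15Shift n F with hS
  set D := stmt15Delta n F with hD
  obtain ⟨r, hr⟩ := hdvd
  have hpr : ¬ p ∣ r := fun ⟨c, hc⟩ => hndvd ⟨c, by rw [hr, hc]; ring⟩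
  have hrF : (r : F) ≠ 0 := fun h => hpr ((CharP.cast_eq_zero_iff F p r).mp h)
  set T := S ^ (p ^ m) with hT
  have hTr : T ^ r = 1 := by
    rw [hT, ← pow_mul, ← hr]
    apply LinearMap.ext
    intro y
    funext j
    rw [stmt15_shift_pow]
    simp [ZMod.natCast_self]
  have hDpm : D ^ (p ^ m) = T - 1 := by
    rw [hD, stmt15Delta, sub_pow_char_pow_of_commute _ _ (Commute.one_right _), one_pow, hT, hS]
  -- key kernel lemma : A (A v) = 0 → A v = 0, with A = D ^ p^m
  have key : ∀ v : ZMod n → F, (D ^ (p ^ m)) ((D ^ (p ^ m)) v) = 0 → (D ^ (p ^ m)) v = 0 := by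
    intro v hv
    set w := (D ^ (p ^ m)) v with hw
    have hTw : T w = w := by
      rw [hDpm] at hv
      simpa [LinearMap.sub_apply, sub_eq_zero] using hv
    have hTv : T v = v + w := by
      have : (T - 1) v = w := by rw [← hDpm, ← hw]
      have h2 : T v - v = w := by simpa [LinearMap.sub_apply] using this
      rw [← h2]; abel
    have horbit : ∀ j : ℕ, (T ^ j) v = v + j • w := by
      intro j
      induction j with
      | zero => simp
      | succ j ih =>
        rw [pow_succ', Module.End.mul_apply, ih, map_add, hTv, map_nsmul, hTw, succ_nsmul]
        abel
    have hrv : v = v + r • w := by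
      conv_lhs => rw [show v = (T ^ r) v by rw [hTr]; rfl]
      exact horbit r
    have hrw : (r : F) • w = 0 := by
      rw [Nat.cast_smul_eq_nsmul]
      have := hrv.symm
      rwa [add_eq_left] at this
    rcases smul_eq_zero.mp hrw with h | h
    · exact absurd h hrF
    · exact h
  -- kernel stabilization
  have kerstab : ∀ j (v : ZMod n → F), ((D ^ (p ^ m)) ^ (j + 1)) v = 0 → (D ^ (p ^ m)) v = 0 := by
    intro j
    induction j with
    | zero => intro v hv; simpa using hv
    | succ j ih =>
      intro v hv
      apply ih
      have h1 : ((D ^ (p ^ m)) ^ (j + 2)) v = 0 := hv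
      have h2 : (D ^ (p ^ m)) ((D ^ (p ^ m)) (((D ^ (p ^ m)) ^ j) v)) = 0 := by
        have : (D ^ (p ^ m)) ^ (j + 2) = (D ^ (p ^ m)) * ((D ^ (p ^ m)) * (D ^ (p ^ m)) ^ j) := by
          rw [pow_succ', pow_succ']
        rw [this] at h1
        simpa [Module.End.mul_apply] using h1
      have h3 := key _ h2
      have : ((D ^ (p ^ m)) ^ (j + 1)) v = (D ^ (p ^ m)) (((D ^ (p ^ m)) ^ j) v) := by
        rw [pow_succ', Module.End.mul_apply]
      rw [this]
      exact h3
  have kerD : ∀ (t : ℕ) (v : ZMod n → F), (D ^ (p ^ m + t)) v = 0 → (D ^ (p ^ m)) v = 0 := by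
    intro t v hv
    have hpm1 : 1 ≤ p ^ m := Nat.one_le_pow _ _ hp.out.pos
    have hle : p ^ m + t ≤ p ^ m * (t + 1) := by nlinarith
    obtain ⟨e, he⟩ := Nat.exists_eq_add_of_le hle
    have hbig : (D ^ (p ^ m * (t + 1))) v = 0 := by
      rw [he, add_comm (p ^ m + t) e, pow_add, Module.End.mul_apply, hv, map_zero]
    apply kerstab t
    rwa [← pow_mul]
  -- pigeonhole
  obtain ⟨a, b, hab, heq⟩ :=
    Finite.exists_ne_map_eq_of_infinite (fun k : ℕ => (D ^ k) x)
  wlog hlt : a < b generalizing a b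
  · exact this b a hab.symm heq.symm (by omega)
  set P := b - a with hP
  have hP1 : 1 ≤ P := by omega
  have habP : a + P = b := by omega
  set v := (D ^ P) x - x with hv
  have hDav : (D ^ a) v = 0 := by
    rw [hv, map_sub]
    have : (D ^ a) ((D ^ P) x) = (D ^ b) x := by
      rw [← Module.End.mul_apply, ← pow_add, habP]
    rw [this, ← heq]
    · abel
  have hDv : (D ^ (p ^ m)) v = 0 := by
    apply kerD a
    rw [pow_add, Module.End.mul_apply, hDav, map_zero]
  refine ⟨P, hP1, ?_⟩
  rw [stmt15_iter, stmt15_iter, ← hD]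
  have : (D ^ (p ^ m)) ((D ^ P) x) = (D ^ (p ^ m)) x := by
    have := hDv
    rw [hv, map_sub, sub_eq_zero] at this
    exact this
  rw [pow_add, Module.End.mul_apply, this]
end

section
/- If y is a periodic point of Δ (i.e., Δ^k y = y for some k ≥ 1), then exactly one preimage of y under Δ is itself periodic, and the remaining q - 1 preimages are not periodic. -/
theorem stmt_17 (q p n : ℕ) (hn : 0 < n) (F : Type*) [Field F] [Fintype F]
    [CharP F p] (hq : Fintype.card F = q) (y : ZMod n → F)
    (hy : ∃ k, 1 ≤ k ∧ (fun (z : ZMod n → F) => fun j => z (j + 1) - z j)^[k] y = y) :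
    (∃! x : ZMod n → F, (fun j => x (j + 1) - x j) = y ∧
      ∃ k, 1 ≤ k ∧ (fun (z : ZMod n → F) => fun j => z (j + 1) - z j)^[k] x = x) ∧
    Nat.card {x : ZMod n → F // (fun j => x (j + 1) - x j) = y ∧
      ¬ ∃ k, 1 ≤ k ∧ (fun (z : ZMod n → F) => fun j => z (j + 1) - z j)^[k] x = x}
      = q - 1 := by
  classical
  have : NeZero n := ⟨hn.ne'⟩
  set f : (ZMod n → F) → (ZMod n → F) := fun z j => z (j + 1) - z j with hfdef
  obtain ⟨k, hk1, hky⟩ := hy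
  have hk : k - 1 + 1 = k := Nat.succ_pred_eq_of_pos hk1
  set x₀ : ZMod n → F := f^[k - 1] y with hx0
  have hfx₀ : f x₀ = y := by
    have h := Function.iterate_succ_apply' f (k - 1) y
    rw [Nat.succ_eq_add_one, hk] at h
    rw [hx0, ← h, hky]
  have hperx₀ : f^[k] x₀ = x₀ := by
    rw [hx0, ← Function.iterate_add_apply, add_comm, Function.iterate_add_apply, hky]
  -- kernel lemma
  have hker : ∀ x : ZMod n → F, (∀ j, x (j + 1) = x j) → ∀ j, x j = x 0 := by
    intro x hx j
    have key : ∀ m : ℕ, x (m : ZMod n) = x 0 := by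
      intro m
      induction m with
      | zero => simp
      | succ m ih => push_cast; rw [hx, ih]
    have h := key j.val
    rwa [ZMod.natCast_val, ZMod.cast_id] at h
  have huniq : ∀ x : ZMod n → F, f x = y → (∃ m, 1 ≤ m ∧ f^[m] x = x) → x = x₀ := by
    rintro x hfx ⟨m, hm1, hmx⟩
    have hN1 : 1 ≤ m * k := Nat.one_le_iff_ne_zero.mpr (Nat.mul_ne_zero (Nat.one_le_iff_ne_zero.mp hm1) (Nat.one_le_iff_ne_zero.mp hk1))
    have hNs : m * k - 1 + 1 = m * k := Nat.succ_pred_eq_of_pos hN1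
    have hNx : f^[m * k] x = x := by
      rw [Function.iterate_mul]
      exact Function.iterate_fixed hmx k
    have hNx₀ : f^[m * k] x₀ = x₀ := by
      rw [mul_comm, Function.iterate_mul]
      exact Function.iterate_fixed hperx₀ m
    have h1 : x = f^[m * k - 1] y := by
      conv_lhs => rw [← hNx, ← hNs, Function.iterate_succ_apply, hfx]
    have h2 : x₀ = f^[m * k - 1] y := by
      conv_lhs => rw [← hNx₀, ← hNs, Function.iterate_succ_apply, hfx₀]
    rw [h1, h2]
  have hpre : ∀ x : ZMod n → F, f x = y → x = fun j => x₀ j + (x 0 - x₀ 0) := by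
    intro x hx
    funext j
    have hd : ∀ j, x j - x₀ j = x 0 - x₀ 0 := by
      intro i
      exact hker (fun j => x j - x₀ j) (fun j => by
        have h1 : x (j + 1) - x j = y j := congrFun hx j
        have h2 : x₀ (j + 1) - x₀ j = y j := congrFun hfx₀ j
        linear_combination h1 - h2) i
    linear_combination hd j
  have e : {x : ZMod n → F // f x = y} ≃ F :=
    { toFun := fun x => x.1 0 - x₀ 0
      invFun := fun c => ⟨fun j => x₀ j + c, by
        funext j
        show (x₀ (j + 1) + c) - (x₀ j + c) = y j
        have h := congrFun hfx₀ j
        linear_combination h⟩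
      left_inv := fun x => Subtype.ext (hpre x.1 x.2).symm
      right_inv := fun c => by simp }
  have hcardfib : ({x : ZMod n → F | f x = y}).ncard = q := by
    rw [← Nat.card_coe_set_eq]
    exact (Nat.card_congr e).trans (by rw [Nat.card_eq_fintype_card, hq])
  have hx₀mem : x₀ ∈ {x : ZMod n → F | f x = y} := hfx₀
  have hset : {x : ZMod n → F | f x = y ∧ ¬ ∃ m, 1 ≤ m ∧ f^[m] x = x}
      = {x : ZMod n → F | f x = y} \ {x₀} := by
    ext x
    simp only [Set.mem_setOf_eq, Set.mem_diff, Set.mem_singleton_iff]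
    constructor
    · rintro ⟨h1, h2⟩
      exact ⟨h1, fun h => h2 (h ▸ ⟨k, hk1, hperx₀⟩)⟩
    · rintro ⟨h1, h2⟩
      exact ⟨h1, fun hp => h2 (huniq x h1 hp)⟩
  constructor
  · refine ⟨x₀, ⟨hfx₀, k, hk1, hperx₀⟩, ?_⟩
    rintro x ⟨hfx, hp⟩
    exact huniq x hfx hp
  · have hmain : Nat.card {x : ZMod n → F // f x = y ∧ ¬ ∃ m, 1 ≤ m ∧ f^[m] x = x} = q - 1 := by
      have h0 : Nat.card {x : ZMod n → F // f x = y ∧ ¬ ∃ m, 1 ≤ m ∧ f^[m] x = x}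
          = ({x : ZMod n → F | f x = y ∧ ¬ ∃ m, 1 ≤ m ∧ f^[m] x = x}).ncard :=
        Nat.card_coe_set_eq _
      rw [h0, hset, Set.ncard_diff_singleton_of_mem hx₀mem, hcardfib]
    exact hmain
end
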